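/- arXiv:2506.05913 — 2 statements merged into one kernel-verified Lean document; each statement's English description precedes it below -/
import Mathlib

section
/- For q ≥ 1, the MED_q criterion Φ(M) = (∫_C (g(z)^T M^{-1} g(z))^q dμ(z))^{1/q} is convex on the set of positive definite symmetric m×m matrices, i.e., for positive definite M₁, M₂ and α ∈ [0,1], Φ(αM₁+(1-α)M₂) ≤ αΦ(M₁) + (1-α)Φ(M₂). -/
/-!
For positive definite `M`, `xᵀ M⁻¹ x = sup_y (2 xᵀy - yᵀ M y)`, the supremum being attained at
`y = M⁻¹ x`. As a supremum of functions affine in `M`, the integrand `M ↦ g(z)ᵀ M⁻¹ g(z)` is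
convex, so the integrand at `α M₁ + (1 - α) M₂` is dominated by the convex combination of the
integrands at `M₁` and `M₂`. The `L^q` norm is monotone on nonnegative functions and, by
Minkowski's inequality, convex; this gives the claim. Since `g` is bounded on `C` and `μ` is
finite, all integrands lie in `L^q(μ|_C)`, so no integral takes its junk value.
-/

open MeasureTheory Matrix Set
open scoped ENNReal

namespace Matrix

variable {n : Type*}

lemma PosDef.convexComb {M₁ M₂ : Matrix n n ℝ} (h₁ : M₁.PosDef) (h₂ : M₂.PosDef) {α : ℝ}
    (hα0 : 0 ≤ α) (hα1 : α ≤ 1) : (α • M₁ + (1 - α) • M₂).PosDef := by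
  rcases hα0.eq_or_lt with rfl | hα
  · simpa using h₂
  · exact (h₁.smul hα).add_posSemidef (h₂.posSemidef.smul (sub_nonneg.2 hα1))

variable [Fintype n] [DecidableEq n]

lemma PosDef.two_mul_dotProduct_sub_le {M : Matrix n n ℝ} (hM : M.PosDef) (x y : n → ℝ) :
    2 * (x ⬝ᵥ y) - y ⬝ᵥ (M *ᵥ y) ≤ x ⬝ᵥ (M⁻¹ *ᵥ x) := by
  set u := M⁻¹ *ᵥ x
  have hMu : M *ᵥ u = x := by
    rw [mulVec_mulVec, mul_nonsing_inv _ hM.det_pos.ne'.isUnit, one_mulVec]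
  have hsymm : ∀ w, u ⬝ᵥ (M *ᵥ w) = x ⬝ᵥ w := fun w => by
    rw [dotProduct_mulVec, ← mulVec_transpose, show Mᵀ = M from hM.isHermitian, hMu]
  have hsq : x ⬝ᵥ u - (2 * (x ⬝ᵥ y) - y ⬝ᵥ (M *ᵥ y)) = (u - y) ⬝ᵥ (M *ᵥ (u - y)) := by
    simp only [mulVec_sub, dotProduct_sub, sub_dotProduct, hsymm, hMu, dotProduct_comm y x,
      dotProduct_comm u x]
    ring
  have h0 : 0 ≤ (u - y) ⬝ᵥ (M *ᵥ (u - y)) := by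
    simpa using hM.posSemidef.dotProduct_mulVec_nonneg (u - y)
  linarith

lemma dotProduct_inv_convexComb_mulVec_le {M₁ M₂ : Matrix n n ℝ} (h₁ : M₁.PosDef)
    (h₂ : M₂.PosDef) {α : ℝ} (hα0 : 0 ≤ α) (hα1 : α ≤ 1) (x : n → ℝ) :
    x ⬝ᵥ ((α • M₁ + (1 - α) • M₂)⁻¹ *ᵥ x)
      ≤ α * (x ⬝ᵥ (M₁⁻¹ *ᵥ x)) + (1 - α) * (x ⬝ᵥ (M₂⁻¹ *ᵥ x)) := by
  set M := α • M₁ + (1 - α) • M₂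
  set y := M⁻¹ *ᵥ x
  have hMy : M *ᵥ y = x := by
    rw [mulVec_mulVec, mul_nonsing_inv _ (h₁.convexComb h₂ hα0 hα1).det_pos.ne'.isUnit,
      one_mulVec]
  have hM : y ⬝ᵥ (M *ᵥ y) = α * (y ⬝ᵥ (M₁ *ᵥ y)) + (1 - α) * (y ⬝ᵥ (M₂ *ᵥ y)) := by
    simp only [M, add_mulVec, smul_mulVec, dotProduct_add, dotProduct_smul, smul_eq_mul]
  have hattained : x ⬝ᵥ y = 2 * (x ⬝ᵥ y) - y ⬝ᵥ (M *ᵥ y) := by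
    rw [hMy, dotProduct_comm y x]; ring
  have k₁ := mul_le_mul_of_nonneg_left (h₁.two_mul_dotProduct_sub_le x y) hα0
  have k₂ := mul_le_mul_of_nonneg_left (h₂.two_mul_dotProduct_sub_le x y) (sub_nonneg.2 hα1)
  rw [hattained, hM]
  linarith

end Matrix

namespace MeasureTheory

variable {X : Type*} [MeasurableSpace X] {ν : Measure X}

lemma memLp_comp_of_ae_mem_isCompact [IsFiniteMeasure ν] {E : Type*} [TopologicalSpace E]
    {K : Set E} (hK : IsCompact K) {Q : E → ℝ} (hQ : ContinuousOn Q K) {g : X → E}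
    (hQg : AEStronglyMeasurable (Q ∘ g) ν) (hgK : ∀ᵐ z ∂ν, g z ∈ K) (p : ℝ≥0∞) :
    MemLp (Q ∘ g) p ν := by
  obtain ⟨c, hc⟩ := hK.exists_bound_of_continuousOn hQ
  exact MemLp.of_bound hQg c (hgK.mono fun z hz => hc _ hz)

lemma MemLp.toReal_eLpNorm_eq_integral_rpow {q : ℝ} (hq : 0 < q) {f : X → ℝ}
    (hf : MemLp f (ENNReal.ofReal q) ν) (hf0 : 0 ≤ᵐ[ν] f) :
    (eLpNorm f (ENNReal.ofReal q) ν).toReal = (∫ z, f z ^ q ∂ν) ^ (1 / q) := by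
  have hnorm : (fun z => ‖f z‖ ^ q) =ᵐ[ν] fun z => f z ^ q := by
    filter_upwards [hf0] with z hz
    rw [Real.norm_of_nonneg hz]
  rw [hf.eLpNorm_eq_integral_rpow_norm (by simpa using hq) ENNReal.ofReal_ne_top,
    ENNReal.toReal_ofReal hq.le, ENNReal.toReal_ofReal (by positivity), integral_congr_ae hnorm,
    one_div]

lemma integral_rpow_one_div_le_of_ae_le_add {q : ℝ} (hq : 1 ≤ q) {f f₁ f₂ : X → ℝ}
    (hf : AEStronglyMeasurable f ν) (hf0 : 0 ≤ᵐ[ν] f)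
    (h₁ : MemLp f₁ (ENNReal.ofReal q) ν) (h₁0 : 0 ≤ᵐ[ν] f₁)
    (h₂ : MemLp f₂ (ENNReal.ofReal q) ν) (h₂0 : 0 ≤ᵐ[ν] f₂) {a b : ℝ} (ha : 0 ≤ a) (hb : 0 ≤ b)
    (hle : ∀ᵐ z ∂ν, f z ≤ a * f₁ z + b * f₂ z) :
    (∫ z, f z ^ q ∂ν) ^ (1 / q)
      ≤ a * (∫ z, f₁ z ^ q ∂ν) ^ (1 / q) + b * (∫ z, f₂ z ^ q ∂ν) ^ (1 / q) := by
  have hq0 : 0 < q := zero_lt_one.trans_le hq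
  set p := ENNReal.ofReal q
  have hp : 1 ≤ p := by simpa [p] using hq
  have hsum : MemLp (a • f₁ + b • f₂) p ν := (h₁.const_smul a).add (h₂.const_smul b)
  have hdom : ∀ᵐ z ∂ν, ‖f z‖ ≤ (a • f₁ + b • f₂) z := by
    filter_upwards [hf0, hle] with z hz hz'
    simpa [abs_of_nonneg hz] using hz'
  have hfLp : MemLp f p ν := hsum.mono hf (hdom.mono fun z hz => hz.trans (le_abs_self _))
  have hminkowski : eLpNorm f p ν ≤ ‖a‖ₑ * eLpNorm f₁ p ν + ‖b‖ₑ * eLpNorm f₂ p ν :=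
    calc eLpNorm f p ν ≤ eLpNorm (a • f₁ + b • f₂) p ν := eLpNorm_mono_ae_real hdom
      _ ≤ eLpNorm (a • f₁) p ν + eLpNorm (b • f₂) p ν :=
        eLpNorm_add_le (h₁.const_smul a).1 (h₂.const_smul b).1 hp
      _ = ‖a‖ₑ * eLpNorm f₁ p ν + ‖b‖ₑ * eLpNorm f₂ p ν := by
        rw [eLpNorm_const_smul, eLpNorm_const_smul]
  rw [← hfLp.toReal_eLpNorm_eq_integral_rpow hq0 hf0,
    ← h₁.toReal_eLpNorm_eq_integral_rpow hq0 h₁0, ← h₂.toReal_eLpNorm_eq_integral_rpow hq0 h₂0]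
  calc (eLpNorm f p ν).toReal ≤ (‖a‖ₑ * eLpNorm f₁ p ν + ‖b‖ₑ * eLpNorm f₂ p ν).toReal :=
        ENNReal.toReal_mono (by finiteness [h₁.eLpNorm_ne_top, h₂.eLpNorm_ne_top]) hminkowski
    _ = _ := by
        rw [ENNReal.toReal_add (by finiteness [h₁.eLpNorm_ne_top])
            (by finiteness [h₂.eLpNorm_ne_top]),
          ENNReal.toReal_mul, ENNReal.toReal_mul, toReal_enorm, toReal_enorm,
          Real.norm_of_nonneg ha, Real.norm_of_nonneg hb]

end MeasureTheory

/-- For q ≥ 1, the MED_q criterion Φ(M) = (∫_C (g(z)^T M⁻¹ g(z))^q dμ)^{1/q}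
is convex on positive definite symmetric matrices. -/
theorem MEDq_criterion_convex {m : ℕ} (C : Set (ℝ × ℝ)) (μ : Measure (ℝ × ℝ))
    [IsFiniteMeasure μ] (g : (ℝ × ℝ) → Fin m → ℝ) (hgm : Measurable g)
    (B : ℝ) (hgb : ∀ z ∈ C, ‖g z‖ ≤ B)
    (q : ℝ) (hq : 1 ≤ q)
    (Φ : Matrix (Fin m) (Fin m) ℝ → ℝ)
    (hΦ : ∀ M, Φ M = (∫ z in C, (g z ⬝ᵥ (M⁻¹ *ᵥ g z)) ^ q ∂μ) ^ (1 / q))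
    (M₁ M₂ : Matrix (Fin m) (Fin m) ℝ) (h₁ : M₁.PosDef) (h₂ : M₂.PosDef)
    (α : ℝ) (hα0 : 0 ≤ α) (hα1 : α ≤ 1) :
    Φ (α • M₁ + (1 - α) • M₂) ≤ α * Φ M₁ + (1 - α) * Φ M₂ := by
  set f : Matrix (Fin m) (Fin m) ℝ → ℝ × ℝ → ℝ := fun M z => g z ⬝ᵥ (M⁻¹ *ᵥ g z)
  -- `{z | ‖g z‖ ≤ B}` is measurable, so the bound holds `μ|_C`-a.e. even if `C` is not.
  have hgB : ∀ᵐ z ∂μ.restrict C, g z ∈ Metric.closedBall 0 B := by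
    simp only [mem_closedBall_zero_iff]
    exact (ae_restrict_iff (measurableSet_le hgm.norm measurable_const)).2 (ae_of_all _ hgb)
  have hquad : ∀ N : Matrix (Fin m) (Fin m) ℝ, Continuous fun x => x ⬝ᵥ (N *ᵥ x) := by
    fun_prop
  have hLp : ∀ M, MemLp (f M) (ENNReal.ofReal q) (μ.restrict C) := fun M =>
    memLp_comp_of_ae_mem_isCompact (isCompact_closedBall 0 B) (hquad _).continuousOn
      ((hquad _).measurable.comp hgm).aestronglyMeasurable hgB _
  have hnonneg : ∀ {M : Matrix (Fin m) (Fin m) ℝ}, M.PosDef → 0 ≤ᵐ[μ.restrict C] f M :=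
    fun hM => ae_of_all _ fun z => by
      simpa using hM.posSemidef.inv.dotProduct_mulVec_nonneg (g z)
  rw [hΦ, hΦ, hΦ]
  exact integral_rpow_one_div_le_of_ae_le_add hq (hLp _).1
    (hnonneg (h₁.convexComb h₂ hα0 hα1)) (hLp _) (hnonneg h₁) (hLp _) (hnonneg h₂) hα0
    (sub_nonneg.2 hα1)
    (ae_of_all _ fun z => dotProduct_inv_convexComb_mulVec_le h₁ h₂ hα0 hα1 (g z))
end

section
/- A bound on the equivalence-theorem functional via Cauchy–Schwarz: for any design ξ with nonsingular information matrix and any z₀ ∈ Z, ∫_C φ(z)^{q-1} α(z₀,z)² dμ(z) ≤ φ(z₀) ∫_C φ(z)^q dμ(z) = φ(z₀) · φ_{MED_q}(ξ)^q, where φ(z) = g(z)^T M(ξ)^{-1} g(z) and α(z₀,z) = g(z)^T M(ξ)^{-1} g(z₀). Hence if φ(z₀) ≤ 1 for all z₀ ∈ Z, the equivalence-theorem inequality holds at all z₀. -/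
/-! Since M⁻¹ is positive definite, (u, v) ↦ u ⬝ᵥ M⁻¹ *ᵥ v is an inner product, so Cauchy–Schwarz
gives α(z₀, z)² ≤ φ(z) φ(z₀) pointwise. Multiplying by φ(z)^(q-1) and integrating gives the bound;
φ^q is integrable because φ is continuous on the compact set Z. -/

open MeasureTheory Matrix Set

theorem Matrix.PosSemidef.dotProduct_mulVec_self_nonneg {n R : Type*} [Fintype n] [CommRing R]
    [PartialOrder R] [StarRing R] [TrivialStar R] {A : Matrix n n R} (hA : A.PosSemidef)
    (x : n → R) : 0 ≤ x ⬝ᵥ A *ᵥ x := by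
  simpa using hA.dotProduct_mulVec_nonneg x

theorem Matrix.PosSemidef.dotProduct_mulVec_sq_le {n R : Type*} [Fintype n] [DecidableEq n]
    [CommRing R] [LinearOrder R] [IsStrictOrderedRing R] [StarRing R] [TrivialStar R]
    {A : Matrix n n R} (hA : A.PosSemidef) (x y : n → R) :
    (x ⬝ᵥ A *ᵥ y) ^ 2 ≤ (x ⬝ᵥ A *ᵥ x) * (y ⬝ᵥ A *ᵥ y) := by
  have hsymm : LinearMap.IsSymm (toBilin' A) :=
    LinearMap.BilinForm.isSymm_iff.mp <| isSymm_toBilin'_iff_isSymm.mpr <|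
      isHermitian_iff_isSymm.mp hA.isHermitian
  have hnonneg (u : n → R) : 0 ≤ toBilin' A u u :=
    (toBilin'_apply' A u u).symm ▸ hA.dotProduct_mulVec_self_nonneg u
  simpa only [toBilin'_apply'] using (toBilin' A).apply_sq_le_of_symm hnonneg hsymm x y

theorem Real.rpow_sub_one_mul_le_mul_rpow {x y a q : ℝ} (hx : 0 ≤ x) (hq : q ≠ 0)
    (ha : 0 ≤ a) (hay : a ≤ x * y) : x ^ (q - 1) * a ≤ y * x ^ q := by
  rcases hx.eq_or_lt with rfl | hx
  · have ha0 : a = 0 := le_antisymm (by simpa using hay) ha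
    simp [ha0, Real.zero_rpow hq]
  · calc x ^ (q - 1) * a ≤ x ^ (q - 1) * (x * y) := by gcongr
      _ = y * x ^ q := by rw [← mul_assoc, ← Real.rpow_add_one hx.ne', sub_add_cancel, mul_comm]

theorem integral_rpow_sub_one_mul_le {X : Type*} [MeasurableSpace X] {μ : Measure X}
    {f a : X → ℝ} {c q : ℝ} (hq : q ≠ 0) (hf : ∀ x, 0 ≤ f x) (ha : ∀ x, 0 ≤ a x)
    (hfa : ∀ x, a x ≤ f x * c) (hint : Integrable (fun x => f x ^ q) μ) :
    ∫ x, f x ^ (q - 1) * a x ∂μ ≤ c * ∫ x, f x ^ q ∂μ := by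
  rw [← integral_const_mul]
  exact integral_mono_of_nonneg
    (.of_forall fun x => mul_nonneg (Real.rpow_nonneg (hf x) _) (ha x)) (hint.const_mul c)
    (.of_forall fun x => Real.rpow_sub_one_mul_le_mul_rpow (hf x) hq (ha x) (hfa x))

theorem ContinuousOn.dotProduct_mulVec_self {X n R : Type*} [TopologicalSpace X] [Fintype n]
    [NonUnitalNonAssocSemiring R] [TopologicalSpace R] [IsTopologicalSemiring R]
    {g : X → n → R} {s : Set X} (hg : ContinuousOn g s) (A : Matrix n n R) :
    ContinuousOn (fun z => g z ⬝ᵥ A *ᵥ g z) s :=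
  (continuous_id.dotProduct (continuous_const.matrix_mulVec continuous_id)).comp_continuousOn hg

theorem equivalence_functional_cauchy_schwarz_bound_general {m : ℕ} (Z C : Set (ℝ × ℝ))
    (hZ : IsCompact Z) (hC : C ⊆ Z)
    (g : (ℝ × ℝ) → Fin m → ℝ) (hg : ContinuousOn g Z)
    (μ : Measure (ℝ × ℝ)) [IsProbabilityMeasure μ]
    (q : ℝ) (hq : 1 ≤ q)
    (M : Matrix (Fin m) (Fin m) ℝ)
    (hMpd : M.PosDef)
    (φ : (ℝ × ℝ) → ℝ) (hφ : ∀ z, φ z = g z ⬝ᵥ (M⁻¹ *ᵥ g z))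
    (α : (ℝ × ℝ) → (ℝ × ℝ) → ℝ) (hα : ∀ z₀ z, α z₀ z = g z ⬝ᵥ (M⁻¹ *ᵥ g z₀)) :
    (∀ z₀ ∈ Z, ∫ z in C, (φ z) ^ (q - 1) * (α z₀ z) ^ 2 ∂μ
        ≤ φ z₀ * ∫ z in C, (φ z) ^ q ∂μ) ∧
    ((∀ z₀ ∈ Z, φ z₀ ≤ 1) → ∀ z₀ ∈ Z,
        ∫ z in C, (φ z) ^ (q - 1) * (α z₀ z) ^ 2 ∂μ ≤ ∫ z in C, (φ z) ^ q ∂μ) := by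
  have hq₀ : 0 < q := by linarith
  have hM : M⁻¹.PosSemidef := hMpd.inv.posSemidef
  have hφ_nonneg (z) : 0 ≤ φ z := hφ z ▸ hM.dotProduct_mulVec_self_nonneg (g z)
  have hαφ (z₀ z) : α z₀ z ^ 2 ≤ φ z * φ z₀ := by
    rw [hα, hφ, hφ]
    exact hM.dotProduct_mulVec_sq_le (g z) (g z₀)
  have hφ_cont : ContinuousOn φ Z := funext hφ ▸ hg.dotProduct_mulVec_self M⁻¹
  have hint : IntegrableOn (fun z => φ z ^ q) C μ :=
    ((hφ_cont.rpow_const fun _ _ => .inr hq₀.le).integrableOn_compact hZ).mono_set hC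
  have bound (z₀) := integral_rpow_sub_one_mul_le hq₀.ne' hφ_nonneg (fun z => sq_nonneg _)
    (hαφ z₀) hint
  refine ⟨fun z₀ _ => bound z₀, fun hφ_le z₀ hz₀ => (bound z₀).trans ?_⟩
  exact mul_le_of_le_one_left (integral_nonneg fun z => Real.rpow_nonneg (hφ_nonneg z) q)
    (hφ_le z₀ hz₀)

/-- Cauchy–Schwarz bound on the equivalence-theorem functional:
∫_C φ^{q-1} α(z₀,·)² dμ ≤ φ(z₀) ∫_C φ^q dμ; hence if φ ≤ 1 on Z the
equivalence inequality holds at all z₀ ∈ Z. -/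
theorem equivalence_functional_cauchy_schwarz_bound {m : ℕ} (Z C : Set (ℝ × ℝ))
    (hZ : IsCompact Z) (hC : C ⊆ Z)
    (g : (ℝ × ℝ) → Fin m → ℝ) (hg : ContinuousOn g Z)
    (μ : Measure (ℝ × ℝ)) [IsProbabilityMeasure μ] (hμ : μ Cᶜ = 0)
    (q : ℝ) (hq : 1 ≤ q)
    (ξ : Measure (ℝ × ℝ)) [IsProbabilityMeasure ξ] (hξZ : ξ Zᶜ = 0)
    (M : Matrix (Fin m) (Fin m) ℝ)
    (hM : M = Matrix.of fun i j => ∫ z in Z, g z i * g z j ∂ξ)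
    (hMpd : M.PosDef)
    (φ : (ℝ × ℝ) → ℝ) (hφ : ∀ z, φ z = g z ⬝ᵥ (M⁻¹ *ᵥ g z))
    (α : (ℝ × ℝ) → (ℝ × ℝ) → ℝ) (hα : ∀ z₀ z, α z₀ z = g z ⬝ᵥ (M⁻¹ *ᵥ g z₀)) :
    (∀ z₀ ∈ Z, ∫ z in C, (φ z) ^ (q - 1) * (α z₀ z) ^ 2 ∂μ
        ≤ φ z₀ * ∫ z in C, (φ z) ^ q ∂μ) ∧
    ((∀ z₀ ∈ Z, φ z₀ ≤ 1) → ∀ z₀ ∈ Z,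
        ∫ z in C, (φ z) ^ (q - 1) * (α z₀ z) ^ 2 ∂μ ≤ ∫ z in C, (φ z) ^ q ∂μ) :=
  equivalence_functional_cauchy_schwarz_bound_general Z C hZ hC g hg μ q hq M hMpd φ hφ α hα
end
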